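/- arXiv:2507.04731 — 3 statements merged into one kernel-verified Lean document; each statement's English description precedes it below -/
import Mathlib

section
/- For every integer p ≥ 1, V_p equals the sum of the subspaces R(π) over all switching sequences π with entries in {1,…,m} of length between 1 and p, i.e., V_p = Σ_{π : 1 ≤ |π| ≤ p} R(π). (No invertibility assumption on the A_i is needed.) -/
/-- Reachable space of a discrete-time switched linear control system
`x_k = A_{i_k} x_{k-1} + B_{i_k} u_k` along the switching sequence `π`
(the head of the list is the first applied mode):
`R(ε) = {0}` and `R(π' i) = A_i R(π') + Im(B_i)`. -/
def reach {n m : ℕ} (A : Fin m → Matrix (Fin n) (Fin n) ℝ) {q : Fin m → ℕ}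
    (B : ∀ i, Matrix (Fin n) (Fin (q i)) ℝ) (π : List (Fin m)) :
    Submodule ℝ (Fin n → ℝ) :=
  π.foldl (fun S i =>
    Submodule.map (Matrix.mulVecLin (A i)) S ⊔ LinearMap.range (Matrix.mulVecLin (B i))) ⊥

/-- The subspaces `V_k`: `V_0 = {0}`, `V_1 = Σ_i Im B_i`, and
`V_{k+1} = V_k + Σ_i A_i V_k` for `k ≥ 1`. -/
def Vsp {n m : ℕ} (A : Fin m → Matrix (Fin n) (Fin n) ℝ) {q : Fin m → ℕ}
    (B : ∀ i, Matrix (Fin n) (Fin (q i)) ℝ) : ℕ → Submodule ℝ (Fin n → ℝ)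
  | 0 => ⊥
  | 1 => ⨆ i, LinearMap.range (Matrix.mulVecLin (B i))
  | (k + 2) => Vsp A B (k + 1) ⊔
      ⨆ i, Submodule.map (Matrix.mulVecLin (A i)) (Vsp A B (k + 1))

/-!
Both `p ↦ V_p` and `p ↦ Σ_{|π| ≤ p} R(π)` vanish at `p = 0` and satisfy
`X_{p+1} = V_1 + Σ_i A_i X_p`. For `V` this holds because the `V_k` increase, so that
`V_1 ⊆ V_p`; for the reachable spaces it is the splitting `π = π' i` of a nonempty sequence.
Sequences of length `0` can be dropped from the sum since `R(ε) = 0`.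
-/

section

variable {n m : ℕ} (A : Fin m → Matrix (Fin n) (Fin n) ℝ) {q : Fin m → ℕ}
  (B : ∀ i, Matrix (Fin n) (Fin (q i)) ℝ)

lemma reach_nil : reach A B [] = ⊥ := rfl

lemma reach_append_singleton (π : List (Fin m)) (i : Fin m) :
    reach A B (π ++ [i]) =
      Submodule.map (Matrix.mulVecLin (A i)) (reach A B π) ⊔
        LinearMap.range (Matrix.mulVecLin (B i)) := by
  simp [reach, List.foldl_append]

lemma reach_singleton (i : Fin m) :
    reach A B [i] = LinearMap.range (Matrix.mulVecLin (B i)) := by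
  simp [reach]

lemma Vsp_le_succ : ∀ k, Vsp A B k ≤ Vsp A B (k + 1)
  | 0 => bot_le
  | _ + 1 => le_sup_left

lemma Vsp_succ : ∀ k, Vsp A B (k + 1) =
    Vsp A B 1 ⊔ ⨆ i, Submodule.map (Matrix.mulVecLin (A i)) (Vsp A B k)
  | 0 => by simp [Vsp]
  | k + 1 => by
    apply le_antisymm
    · refine sup_le ((Vsp_succ k).le.trans ?_) le_sup_right
      gcongr
      exact Vsp_le_succ A B k
    · refine sup_le ?_ le_sup_right
      calc Vsp A B 1 ≤ Vsp A B (k + 1) := monotone_nat_of_le_succ (Vsp_le_succ A B) k.succ_pos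
        _ ≤ _ := le_sup_left

def reachUpTo (p : ℕ) : Submodule ℝ (Fin n → ℝ) :=
  ⨆ (π : List (Fin m)) (_ : π.length ≤ p), reach A B π

lemma reachUpTo_zero : reachUpTo A B 0 = ⊥ := by
  simp [reachUpTo, reach_nil]

lemma reachUpTo_succ (p : ℕ) : reachUpTo A B (p + 1) =
    Vsp A B 1 ⊔ ⨆ i, Submodule.map (Matrix.mulVecLin (A i)) (reachUpTo A B p) := by
  apply le_antisymm
  · refine iSup₂_le fun π hπ => ?_
    induction π using List.reverseRecOn with
    | nil => exact bot_le
    | append_singleton π i _ =>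
      have hπ' : π.length ≤ p := by simpa using hπ
      rw [reach_append_singleton]
      refine sup_le ?_ (le_sup_of_le_left (le_iSup_of_le i le_rfl))
      exact le_sup_of_le_right
        (le_iSup_of_le i (Submodule.map_mono (le_iSup₂_of_le π hπ' le_rfl)))
  · refine sup_le (iSup_le fun i => ?_) (iSup_le fun i => ?_)
    · rw [← reach_singleton A B i]
      exact le_iSup₂_of_le [i] (by simp) le_rfl
    · refine Submodule.map_le_iff_le_comap.mpr (iSup₂_le fun π hπ => ?_)
      refine Submodule.map_le_iff_le_comap.mp ?_
      calc Submodule.map (Matrix.mulVecLin (A i)) (reach A B π) ≤ reach A B (π ++ [i]) := by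
            rw [reach_append_singleton]; exact le_sup_left
        _ ≤ reachUpTo A B (p + 1) := le_iSup₂_of_le (π ++ [i]) (by simpa using hπ) le_rfl

lemma reachUpTo_eq_iSup_one_le_length (p : ℕ) : reachUpTo A B p =
    ⨆ (π : List (Fin m)) (_ : 1 ≤ π.length ∧ π.length ≤ p), reach A B π := by
  rw [reachUpTo]
  refine le_antisymm (iSup₂_le fun π hπ => ?_)
    (iSup_mono fun π => iSup_le fun hπ => le_iSup_of_le hπ.2 le_rfl)
  cases π with
  | nil => exact bot_le
  | cons i π => exact le_iSup₂_of_le (i :: π) ⟨by simp, hπ⟩ le_rfl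

theorem Vsp_eq_reachUpTo : ∀ p, Vsp A B p = reachUpTo A B p
  | 0 => (reachUpTo_zero A B).symm
  | p + 1 => by rw [Vsp_succ, reachUpTo_succ, Vsp_eq_reachUpTo p]

end

theorem stmt5_general {n m : ℕ}
    (A : Fin m → Matrix (Fin n) (Fin n) ℝ) {q : Fin m → ℕ}
    (B : ∀ i, Matrix (Fin n) (Fin (q i)) ℝ)
    (p : ℕ) :
    Vsp A B p =
      ⨆ π : {l : List (Fin m) // 1 ≤ l.length ∧ l.length ≤ p}, reach A B π.1 := by
  rw [Vsp_eq_reachUpTo, reachUpTo_eq_iSup_one_le_length, iSup_subtype']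

/-- `V_p` is the sum of the reachable spaces `R(π)` over sequences of length between `1` and `p`. -/
theorem stmt5 {n m : ℕ} (hn : 1 ≤ n) (hm : 1 ≤ m)
    (A : Fin m → Matrix (Fin n) (Fin n) ℝ) {q : Fin m → ℕ}
    (B : ∀ i, Matrix (Fin n) (Fin (q i)) ℝ)
    (p : ℕ) (hp : 1 ≤ p) :
    Vsp A B p =
      ⨆ π : {l : List (Fin m) // 1 ≤ l.length ∧ l.length ≤ p}, reach A B π.1 :=
  stmt5_general A B p
end

section
/- Assume every matrix A_i (i = 1,…,m) is invertible. If π is a finite switching sequence such that dim R(π) ≥ dim R(π') for every finite switching sequence π', then R(π') ⊆ R(π) for every finite switching sequence π'; consequently the reachable set R = ∪_{π'} R(π') equals R(π). -/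
/-!
Let `Φ_π` be the product of the `A_i` along `π`, so that `R(σ π) = Φ_π R(σ) + R(π)`.
Since `R(σ π) ⊇ R(π)` and `R(π)` has maximal dimension, `Φ_π R(σ) ⊆ R(π)` for every `σ`.
Taking `σ = π`, the injective map `Φ_π` sends `R(π)` into itself, hence onto itself, and then
`Φ_π R(σ) ⊆ Φ_π R(π)` gives `R(σ) ⊆ R(π)`.
-/

theorem Submodule.le_of_map_le_of_map_le_self {K V : Type*} [DivisionRing K] [AddCommGroup V]
    [Module K V] [FiniteDimensional K V] {f : V →ₗ[K] V} (hf : Function.Injective f)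
    {S T : Submodule K V} (hT : T.map f ≤ T) (hS : S.map f ≤ T) : S ≤ T := by
  have hTf : T.map f = T :=
    eq_of_le_of_finrank_le hT (LinearEquiv.finrank_eq (equivMapOfInjective f hf T)).le
  rw [← map_le_map_iff_of_injective hf, hTf]
  exact hS

section SwitchedSystem

variable {n m : ℕ} (A : Fin m → Matrix (Fin n) (Fin n) ℝ) {q : Fin m → ℕ}
  (B : ∀ i, Matrix (Fin n) (Fin (q i)) ℝ)

def reachStep (S : Submodule ℝ (Fin n → ℝ)) (i : Fin m) : Submodule ℝ (Fin n → ℝ) :=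
  S.map (A i).mulVecLin ⊔ LinearMap.range (B i).mulVecLin

theorem reach_eq_foldl (π : List (Fin m)) : reach A B π = π.foldl (reachStep A B) ⊥ := rfl

/-- `transition A [i₁, …, iₖ]` is multiplication by `A iₖ * ⋯ * A i₁`. -/
def transition : List (Fin m) → (Fin n → ℝ) →ₗ[ℝ] (Fin n → ℝ)
  | [] => LinearMap.id
  | i :: τ => (transition τ).comp (A i).mulVecLin

theorem injective_transition (hA : ∀ i, IsUnit (A i)) :
    ∀ τ : List (Fin m), Function.Injective (transition A τ)
  | [] => Function.injective_id
  | i :: τ => (injective_transition hA τ).comp (Matrix.mulVec_injective_of_isUnit (hA i))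

theorem foldl_reachStep (τ : List (Fin m)) (S : Submodule ℝ (Fin n → ℝ)) :
    τ.foldl (reachStep A B) S = S.map (transition A τ) ⊔ reach A B τ := by
  induction τ generalizing S with
  | nil => simp [transition, reach_eq_foldl]
  | cons i τ ih =>
    rw [List.foldl_cons, ih, reach_eq_foldl A B (i :: τ), List.foldl_cons, ih]
    simp only [reachStep, transition, Submodule.map_sup, Submodule.map_bot, Submodule.map_comp,
      bot_sup_eq, sup_assoc]

theorem reach_append (σ τ : List (Fin m)) :
    reach A B (σ ++ τ) = (reach A B σ).map (transition A τ) ⊔ reach A B τ := by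
  rw [reach_eq_foldl, List.foldl_append, ← reach_eq_foldl, foldl_reachStep]

theorem map_transition_reach_le_of_finrank_le {π : List (Fin m)}
    (hmax : ∀ π' : List (Fin m),
      Module.finrank ℝ (reach A B π') ≤ Module.finrank ℝ (reach A B π))
    (σ : List (Fin m)) : (reach A B σ).map (transition A π) ≤ reach A B π := by
  have hsub : reach A B π ≤ reach A B (σ ++ π) := reach_append A B σ π ▸ le_sup_right
  have heq : reach A B (σ ++ π) = reach A B π :=
    (Submodule.eq_of_le_of_finrank_le hsub (hmax _)).symm
  exact heq ▸ reach_append A B σ π ▸ le_sup_left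

end SwitchedSystem

theorem stmt6_general {n m : ℕ}
    (A : Fin m → Matrix (Fin n) (Fin n) ℝ) {q : Fin m → ℕ}
    (B : ∀ i, Matrix (Fin n) (Fin (q i)) ℝ)
    (hA : ∀ i, IsUnit (A i)) (π : List (Fin m))
    (hmax : ∀ π' : List (Fin m),
      Module.finrank ℝ (reach A B π') ≤ Module.finrank ℝ (reach A B π)) :
    (∀ π' : List (Fin m), reach A B π' ≤ reach A B π) ∧
    (⋃ π' : List (Fin m), (reach A B π' : Set (Fin n → ℝ))) = ↑(reach A B π) := by
  have hmap := map_transition_reach_le_of_finrank_le A B hmax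
  have hle : ∀ π' : List (Fin m), reach A B π' ≤ reach A B π := fun π' =>
    Submodule.le_of_map_le_of_map_le_self (injective_transition A hA π) (hmap π) (hmap π')
  refine ⟨hle, Set.Subset.antisymm (Set.iUnion_subset hle) ?_⟩
  exact Set.subset_iUnion (fun π' => (reach A B π' : Set (Fin n → ℝ))) π

/-- A reachable space of maximal dimension contains every reachable space,
hence equals the reachable set. -/
theorem stmt6 {n m : ℕ} (hn : 1 ≤ n) (hm : 1 ≤ m)
    (A : Fin m → Matrix (Fin n) (Fin n) ℝ) {q : Fin m → ℕ}
    (B : ∀ i, Matrix (Fin n) (Fin (q i)) ℝ)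
    (hA : ∀ i, IsUnit (A i)) (π : List (Fin m))
    (hmax : ∀ π' : List (Fin m),
      Module.finrank ℝ (reach A B π') ≤ Module.finrank ℝ (reach A B π)) :
    (∀ π' : List (Fin m), reach A B π' ≤ reach A B π) ∧
    (⋃ π' : List (Fin m), (reach A B π' : Set (Fin n → ℝ))) = ↑(reach A B π) :=
  stmt6_general A B hA π hmax
end

section
/- For all integers n, r, m with r ≥ 1 and 1 ≤ m ≤ n - r, there exist invertible matrices A_1,…,A_m ∈ ℝ^{n×n} and matrices B_1,…,B_m ∈ ℝ^{n×r} each of rank r such that the associated switched linear control system is controllable, there exists a controllable switching sequence of length n - r + 1 + m(m-1)/2, and no controllable switching sequence has length strictly smaller than n - r + 1 + m(m-1)/2. -/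
/-!
Take permutation matrices for the `A_i` and let every `B_i` select the coordinates `0, …, h`,
where `h = r - 1`. If `R(π)` is spanned by the basis vectors `e x`, `x ∈ S`, then `R(π i)` is
spanned by those with `x ∈ σ_i(S) ∪ {0, …, h}`, so controllability becomes a covering game on the
states `0, …, n - 1`. With `T = n - r - m + 1 ≥ 1`, the last mode rotates the cycle
`h → h + T → h + T - 1 → ⋯ → h + 1 → h` and mode `j < m - 1` swaps the neighbours `h + T + j`,
`h + T + j + 1` of the path `h + T, …, n - 1`.

Lower bound: weigh the inputs by `0`, the other cycle states by `1` and the path state `h + T + j`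
by `j + 1`. Each mode sends at most one state to a state of larger weight, larger by one, so a step
raises the total weight of the covered set by at most one. The first step covers only the inputs,
and the total weight of all states is `n - r + m(m-1)/2`.

Upper bound: after one rotation, for `k = m - 2, …, 0` the word `rotate, swap 0, …, swap k` carries
a copy of the hub `h` to the path state `h + T + k + 1`, which no later letter moves; `T` final
rotations then fill the cycle.
-/

open Matrix Finset Equiv Function

section CoordinateSubspace

variable {ι : Type*} [Fintype ι]

def coordSpan (S : Set ι) : Submodule ℝ (ι → ℝ) :=
  Submodule.span ℝ (Pi.basisFun ℝ ι '' S)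

lemma coordSpan_empty : coordSpan (∅ : Set ι) = ⊥ := by
  simp [coordSpan]

lemma coordSpan_union (S S' : Set ι) : coordSpan (S ∪ S') = coordSpan S ⊔ coordSpan S' := by
  simp only [coordSpan, Set.image_union, Submodule.span_union]

lemma coordSpan_eq_top_iff [DecidableEq ι] {S : Set ι} : coordSpan S = ⊤ ↔ S = Set.univ := by
  refine ⟨fun hS => Set.eq_univ_of_forall fun x => ?_, fun hS => by
    rw [hS, coordSpan, Set.image_univ, Module.Basis.span_eq]⟩
  have hx : Pi.basisFun ℝ ι x ∈ coordSpan S := hS ▸ Submodule.mem_top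
  rw [coordSpan, Module.Basis.mem_span_image, Module.Basis.repr_self] at hx
  simpa using hx

-- `σ.permMatrix ℝ` acts by `v ↦ v ∘ σ`, so it is `σ⁻¹.permMatrix ℝ` that sends `e x` to `e (σ x)`.
lemma map_permMatrix_inv_coordSpan [DecidableEq ι] (σ : Perm ι) (S : Set ι) :
    (coordSpan S).map ((σ⁻¹).permMatrix ℝ).mulVecLin = coordSpan (σ '' S) := by
  rw [coordSpan, coordSpan, Submodule.map_span, Set.image_image, Set.image_image]
  congr! 2 with x
  rw [mulVecLin_apply, permMatrix_mulVec, Pi.basisFun_apply,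
    Pi.single_comp_equiv, Pi.basisFun_apply, Perm.inv_def, symm_symm]

lemma isUnit_permMatrix [DecidableEq ι] (σ : Perm ι) : IsUnit (σ.permMatrix ℝ) := by
  rw [isUnit_iff_isUnit_det, det_permutation]
  simp

variable {κ : Type*}

lemma col_submatrix_one [DecidableEq ι] (e : κ → ι) :
    ((1 : Matrix ι ι ℝ).submatrix id e).col = Pi.basisFun ℝ ι ∘ e := by
  ext j x
  simp [one_apply, Pi.single_apply]

lemma range_mulVecLin_submatrix_one [DecidableEq ι] [Fintype κ] (e : κ → ι) :
    LinearMap.range ((1 : Matrix ι ι ℝ).submatrix id e).mulVecLin = coordSpan (Set.range e) := by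
  rw [range_mulVecLin, col_submatrix_one, Set.range_comp, coordSpan]

lemma rank_submatrix_one [DecidableEq ι] [Fintype κ] {e : κ → ι} (he : Injective e) :
    ((1 : Matrix ι ι ℝ).submatrix id e).rank = Fintype.card κ := by
  rw [rank_eq_finrank_span_cols, col_submatrix_one,
    finrank_span_eq_card ((Pi.basisFun ℝ ι).linearIndependent.comp e he)]

end CoordinateSubspace

lemma List.foldl_eq_self_of_forall_mem {α β : Type*} {f : α → β → α} {a : α} {l : List β}
    (hf : ∀ b ∈ l, f a b = a) : l.foldl f a = a := by
  induction l with
  | nil => rfl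
  | cons b l ih =>
    rw [List.foldl_cons, hf b List.mem_cons_self]
    exact ih fun b' hb' => hf b' (List.mem_cons_of_mem b hb')

section CoveringGame

variable {α ι : Type*} [DecidableEq α] (σ : ι → Perm α) (R : Finset α)

def coverStep (S : Finset α) (i : ι) : Finset α :=
  S.image (σ i) ∪ R

lemma coverStep_empty (i : ι) : coverStep σ R ∅ i = R := by
  simp [coverStep]

lemma subset_foldl_coverStep {π : List ι} (hπ : π ≠ []) (S : Finset α) :
    R ⊆ π.foldl (coverStep σ R) S := by
  rw [← List.dropLast_append_getLast hπ, List.foldl_append, List.foldl_cons, List.foldl_nil]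
  exact subset_union_right

lemma foldl_apply_mem_foldl_coverStep {S : Finset α} {x : α} (hx : x ∈ S) (π : List ι) :
    π.foldl (fun y i => σ i y) x ∈ π.foldl (coverStep σ R) S := by
  induction π generalizing S x with
  | nil => exact hx
  | cons i π ih => exact ih (mem_union_left _ (mem_image_of_mem _ hx))

lemma foldl_apply_mem_foldl_coverStep_append {π₁ : List ι} (hπ₁ : π₁ ≠ []) (π₂ : List ι)
    {x : α} (hx : x ∈ R) (S : Finset α) :
    π₂.foldl (fun y i => σ i y) x ∈ (π₁ ++ π₂).foldl (coverStep σ R) S := by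
  rw [List.foldl_append]
  exact foldl_apply_mem_foldl_coverStep σ R (subset_foldl_coverStep σ R hπ₁ S hx) π₂

lemma sum_image_perm_le_add_one (w : α → ℕ) (τ : Perm α) (a : α)
    (hτ : ∀ x, w (τ x) ≤ w x + if x = a then 1 else 0) (S : Finset α) :
    ∑ x ∈ S.image τ, w x ≤ ∑ x ∈ S, w x + 1 := by
  rw [sum_image τ.injective.injOn]
  calc ∑ x ∈ S, w (τ x) ≤ ∑ x ∈ S, (w x + if x = a then 1 else 0) := sum_le_sum fun x _ => hτ x
    _ ≤ ∑ x ∈ S, w x + 1 := by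
      rw [sum_add_distrib, sum_ite_eq']
      split_ifs <;> simp

variable {R} (w : α → ℕ) (hR : ∀ x ∈ R, w x = 0)
  (hσ : ∀ i, ∃ a, ∀ x, w (σ i x) ≤ w x + if x = a then 1 else 0)
include hR hσ

lemma sum_foldl_coverStep_le (π : List ι) (S : Finset α) :
    ∑ x ∈ π.foldl (coverStep σ R) S, w x ≤ ∑ x ∈ S, w x + π.length := by
  induction π generalizing S with
  | nil => simp
  | cons i π ih =>
    obtain ⟨a, ha⟩ := hσ i
    have hstep : ∑ x ∈ coverStep σ R S i, w x ≤ ∑ x ∈ S, w x + 1 := calc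
      ∑ x ∈ coverStep σ R S i, w x = ∑ x ∈ S.image (σ i), w x :=
        (sum_subset subset_union_left fun x hx hxS => hR x <| by
          simpa [coverStep, hxS] using hx).symm
      _ ≤ ∑ x ∈ S, w x + 1 := sum_image_perm_le_add_one w (σ i) a ha S
    rw [List.foldl_cons, List.length_cons]
    linarith [ih (coverStep σ R S i)]

lemma sum_lt_length_of_foldl_coverStep_eq_univ [Fintype α] [Nonempty α] {π : List ι}
    (hπ : π.foldl (coverStep σ R) ∅ = univ) : ∑ x, w x < π.length := by
  cases π with
  | nil => exact absurd hπ.symm (univ_nonempty.ne_empty)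
  | cons i π =>
    have hsum := sum_foldl_coverStep_le σ w hR hσ π R
    rw [List.foldl_cons, coverStep_empty] at hπ
    rw [hπ, sum_eq_zero hR] at hsum
    rw [List.length_cons]
    omega

end CoveringGame

lemma reach_permMatrix_inv {n m r : ℕ} (σ : Fin m → Perm (Fin n))
    {B : Matrix (Fin n) (Fin r) ℝ} {R : Finset (Fin n)}
    (hB : LinearMap.range B.mulVecLin = coordSpan ↑R) (π : List (Fin m)) :
    reach (fun i => (σ i)⁻¹.permMatrix ℝ) (fun _ => B) π
      = coordSpan ↑(π.foldl (coverStep σ R) ∅) := by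
  rw [reach, ← coordSpan_empty, ← coe_empty]
  refine List.foldl_hom (fun S : Finset (Fin n) => coordSpan (S : Set (Fin n))) fun S i => ?_
  rw [map_permMatrix_inv_coordSpan, hB, ← coordSpan_union, coverStep, coe_union, coe_image]

namespace ExtremalSystem

variable {n h T c : ℕ}

def modeMap (h T c i x : ℕ) : ℕ :=
  if i < c then
    if x = h + T + i then x + 1 else if x = h + T + i + 1 then x - 1 else x
  else if x = h then h + T else if h < x ∧ x ≤ h + T then x - 1 else x

noncomputable def modePerm (hn : h + T + c + 1 = n) (i : Fin (c + 1)) : Perm (Fin n) :=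
  Equiv.ofBijective (fun x => ⟨modeMap h T c i x, by unfold modeMap; split_ifs <;> omega⟩) <| by
    refine Injective.bijective_of_finite fun x y hxy => Fin.ext ?_
    simp only [Fin.mk.injEq, modeMap] at hxy
    split_ifs at hxy <;> omega

@[simp]
lemma val_modePerm (hn : h + T + c + 1 = n) (i : Fin (c + 1)) (x : Fin n) :
    (modePerm hn i x).val = modeMap h T c i x :=
  rfl

def trajectory (h T c : ℕ) (π : List (Fin (c + 1))) (x : ℕ) : ℕ :=
  π.foldl (fun v (i : Fin (c + 1)) => modeMap h T c i v) x

lemma val_foldl_modePerm (hn : h + T + c + 1 = n) (π : List (Fin (c + 1))) (x : Fin n) :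
    (π.foldl (fun y i => modePerm hn i y) x).val = trajectory h T c π x := by
  rw [trajectory]
  exact (List.foldl_hom Fin.val fun _ _ => rfl).symm

def weight (h T x : ℕ) : ℕ :=
  if x ≤ h then 0 else if x ≤ h + T then 1 else x - h - T + 1

lemma weight_modeMap_le (hT : 1 ≤ T) (i x : ℕ) :
    weight h T (modeMap h T c i x)
      ≤ weight h T x + if x = (if i < c then h + T + i else h) then 1 else 0 := by
  unfold weight modeMap
  split_ifs <;> omega

lemma sum_range_weight_cycle {j : ℕ} (hj : j ≤ T) :
    ∑ v ∈ range (h + 1 + j), weight h T v = j := by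
  induction j with
  | zero => exact sum_eq_zero fun v hv => by simp [weight, Nat.lt_succ_iff.mp (mem_range.mp hv)]
  | succ j ih =>
    rw [← add_assoc, sum_range_succ, ih (by omega), weight, if_neg (by omega), if_pos (by omega)]

lemma sum_range_weight_path (k : ℕ) :
    ∑ v ∈ range (h + T + 1 + k), weight h T v = T + k + ∑ j ∈ range (k + 1), j := by
  induction k with
  | zero => simpa [add_right_comm h] using sum_range_weight_cycle (h := h) le_rfl
  | succ k ih =>
    rw [← add_assoc, sum_range_succ, ih, sum_range_succ (n := k + 1), weight,
      if_neg (by omega), if_neg (by omega)]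
    omega

lemma sum_weight (hn : h + T + c + 1 = n) :
    ∑ x : Fin n, weight h T x = T + c + ∑ j ∈ range (c + 1), j := by
  rw [Fin.sum_univ_eq_sum_range (weight h T), ← hn, add_right_comm _ c, sum_range_weight_path]

def delivery (c k : ℕ) : List (Fin (c + 1)) :=
  Fin.last c :: (List.range (k + 1)).map (Fin.ofNat (c + 1))

def deliveries (c : ℕ) : ℕ → List (Fin (c + 1))
  | 0 => []
  | k + 1 => delivery c k ++ deliveries c k

def extremalWord (c T : ℕ) : List (Fin (c + 1)) :=
  Fin.last c :: (deliveries c c ++ List.replicate T (Fin.last c))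

lemma length_deliveries (c k : ℕ) :
    (deliveries c k).length = k + ∑ j ∈ range (k + 1), j := by
  induction k with
  | zero => rfl
  | succ k ih =>
    rw [deliveries, List.length_append, ih, delivery, sum_range_succ _ (k + 1)]
    simp only [List.length_cons, List.length_map, List.length_range]
    omega

lemma length_extremalWord (c T : ℕ) :
    (extremalWord c T).length = T + c + 1 + ∑ j ∈ range (c + 1), j := by
  simp only [extremalWord, List.length_cons, List.length_append, length_deliveries,
    List.length_replicate]
  omega

lemma trajectory_append (π₁ π₂ : List (Fin (c + 1))) (x : ℕ) :
    trajectory h T c (π₁ ++ π₂) x = trajectory h T c π₂ (trajectory h T c π₁ x) :=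
  List.foldl_append

lemma trajectory_replicate_last {k : ℕ} (hk : 1 ≤ k) (hkT : k ≤ T) :
    trajectory h T c (List.replicate k (Fin.last c)) h = h + T + 1 - k := by
  induction k, hk using Nat.le_induction with
  | base => simp [trajectory, modeMap]
  | succ k hk ih =>
    rw [List.replicate_succ', trajectory_append, ih (by omega)]
    simp only [trajectory, List.foldl_cons, List.foldl_nil, modeMap, Fin.val_last]
    split_ifs <;> omega

lemma trajectory_delivery {k : ℕ} (hk : k < c) :
    trajectory h T c (delivery c k) h = h + T + k + 1 := by
  have hswaps : ∀ j ≤ k,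
      trajectory h T c ((List.range (j + 1)).map (Fin.ofNat (c + 1))) (h + T) = h + T + j + 1 := by
    intro j hj
    induction j with
    | zero => simp [trajectory, modeMap, Nat.mod_eq_of_lt (show 0 < c + 1 by omega)]; omega
    | succ j ih =>
      rw [List.range_succ, List.map_append, trajectory_append, ih (by omega)]
      simp only [trajectory, List.map_cons, List.map_nil, List.foldl_cons, List.foldl_nil,
        Fin.val_ofNat, Nat.mod_eq_of_lt (show j + 1 < c + 1 by omega), modeMap]
      split_ifs <;> omega
  rw [delivery, ← List.singleton_append, trajectory_append, ← hswaps k le_rfl]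
  simp [trajectory, modeMap]

lemma val_lt_of_mem_deliveries {k : ℕ} (hk : k ≤ c) {i : Fin (c + 1)} (hi : i ∈ deliveries c k) :
    i = Fin.last c ∨ i.val < k := by
  induction k with
  | zero => simp [deliveries] at hi
  | succ k ih =>
    simp only [deliveries, delivery, List.mem_append, List.mem_cons, List.mem_map,
      List.mem_range] at hi
    rcases hi with (hi | ⟨j, hj, rfl⟩) | hi
    · exact Or.inl hi
    · right
      rw [Fin.val_ofNat, Nat.mod_eq_of_lt (by omega)]
      omega
    · exact (ih (by omega) hi).imp_right (by omega)

lemma deliveries_eq_append {k l : ℕ} (hkl : k < l) :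
    ∃ X, deliveries c l = X ++ (delivery c k ++ deliveries c k) := by
  induction l, hkl using Nat.le_induction with
  | base => exact ⟨[], rfl⟩
  | succ l _ ih =>
    obtain ⟨X, hX⟩ := ih
    exact ⟨delivery c l ++ X, by rw [deliveries, hX, List.append_assoc]⟩

lemma trajectory_path {k : ℕ} (hk : k < c) :
    trajectory h T c (delivery c k ++ (deliveries c k ++ List.replicate T (Fin.last c))) h
      = h + T + k + 1 := by
  rw [trajectory_append, trajectory_delivery hk]
  refine List.foldl_eq_self_of_forall_mem fun i hi => ?_
  have hi' : i = Fin.last c ∨ i.val < k := by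
    rcases List.mem_append.mp hi with hi | hi
    · exact val_lt_of_mem_deliveries hk.le hi
    · exact Or.inl (List.eq_of_mem_replicate hi)
  rcases hi' with rfl | hi'
  · simp only [modeMap, Fin.val_last]
    split_ifs <;> omega
  · unfold modeMap
    split_ifs <;> omega

def inputStates (n h : ℕ) : Finset (Fin n) :=
  univ.filter fun x => x.val ≤ h

lemma coe_inputStates (hr : h + 1 ≤ n) :
    (inputStates n h : Set (Fin n)) = Set.range (Fin.castLE hr) := by
  rw [Fin.range_castLE]
  ext x
  simp [inputStates]

lemma weight_eq_zero_of_mem_inputStates {x : Fin n} (hx : x ∈ inputStates n h) :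
    weight h T x = 0 := by
  simp_all [inputStates, weight]

lemma exists_weight_modePerm_le (hT : 1 ≤ T) (hn : h + T + c + 1 = n) (i : Fin (c + 1)) :
    ∃ a, ∀ x : Fin n, weight h T (modePerm hn i x) ≤ weight h T x + if x = a then 1 else 0 :=
  ⟨⟨if i.val < c then h + T + i else h, by split_ifs <;> omega⟩, fun x => by
    simpa [Fin.ext_iff] using weight_modeMap_le hT i x⟩

lemma reach_eq_coordSpan (hn : h + T + c + 1 = n) (π : List (Fin (c + 1))) :
    reach (fun i => (modePerm hn i)⁻¹.permMatrix ℝ)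
        (fun _ => (1 : Matrix (Fin n) (Fin n) ℝ).submatrix id (Fin.castLE (by omega : h + 1 ≤ n))) π
      = coordSpan ↑(π.foldl (coverStep (modePerm hn) (inputStates n h)) ∅) := by
  refine reach_permMatrix_inv (modePerm hn) ?_ π
  rw [range_mulVecLin_submatrix_one, coe_inputStates]

lemma foldl_extremalWord_coverStep (hT : 1 ≤ T) (hn : h + T + c + 1 = n) :
    (extremalWord c T).foldl (coverStep (modePerm hn) (inputStates n h)) ∅ = univ := by
  have hub : (⟨h, by omega⟩ : Fin n) ∈ inputStates n h := by simp [inputStates]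
  have mem_of_trajectory : ∀ π₁ π₂ : List (Fin (c + 1)), π₁ ≠ [] →
      extremalWord c T = π₁ ++ π₂ → ∀ x : Fin n, trajectory h T c π₂ h = x →
      x ∈ (extremalWord c T).foldl (coverStep (modePerm hn) (inputStates n h)) ∅ := by
    intro π₁ π₂ hπ₁ hw x hx
    rw [hw]
    convert foldl_apply_mem_foldl_coverStep_append (modePerm hn) _ hπ₁ π₂ hub ∅
    rw [Fin.ext_iff, val_foldl_modePerm, hx]
  refine eq_univ_of_forall fun x => ?_
  rcases le_or_gt x.val h with hxh | hxh
  · exact subset_foldl_coverStep _ _ (List.cons_ne_nil _ _) _ (by simpa [inputStates])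
  rcases le_or_gt x.val (h + T) with hxT | hxT
  · apply mem_of_trajectory
      (Fin.last c :: (deliveries c c ++ List.replicate (x.val - h - 1) (Fin.last c)))
      (List.replicate (h + T + 1 - x.val) (Fin.last c)) (List.cons_ne_nil _ _)
    · rw [extremalWord, List.cons_append, List.append_assoc, ← List.replicate_add]
      congr 3
      omega
    · rw [trajectory_replicate_last (by omega) (by omega)]
      omega
  · obtain ⟨X, hX⟩ := deliveries_eq_append (c := c) (show x.val - h - T - 1 < c by omega)
    apply mem_of_trajectory (Fin.last c :: X) (delivery c (x.val - h - T - 1) ++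
      (deliveries c (x.val - h - T - 1) ++ List.replicate T (Fin.last c))) (List.cons_ne_nil _ _)
    · rw [extremalWord, hX]
      simp only [List.cons_append, List.append_assoc]
    · rw [trajectory_path (by omega)]
      omega

end ExtremalSystem

/-- For `r ≥ 1` and `1 ≤ m ≤ n - r` there is a controllable system with invertible
`A_i` and rank-`r` matrices `B_i` whose shortest controllable sequences have length
exactly `n - r + 1 + m(m-1)/2`. -/
theorem stmt15 (n m r : ℕ) (hr : 1 ≤ r) (hm : 1 ≤ m) (hmn : m ≤ n - r) :
    ∃ (A : Fin m → Matrix (Fin n) (Fin n) ℝ) (B : Fin m → Matrix (Fin n) (Fin r) ℝ),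
      (∀ i, IsUnit (A i)) ∧
      (∀ i, (B i).rank = r) ∧
      (⋃ π : List (Fin m), (reach A B π : Set (Fin n → ℝ))) = Set.univ ∧
      (∃ π : List (Fin m), reach A B π = ⊤ ∧
        π.length = n - r + 1 + m * (m - 1) / 2) ∧
      (∀ π : List (Fin m), reach A B π = ⊤ →
        n - r + 1 + m * (m - 1) / 2 ≤ π.length) := by
  obtain ⟨c, rfl⟩ : ∃ c, m = c + 1 := ⟨m - 1, by omega⟩
  obtain ⟨h, rfl⟩ : ∃ h, r = h + 1 := ⟨r - 1, by omega⟩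
  obtain ⟨T, hT, hn⟩ : ∃ T, 1 ≤ T ∧ h + T + c + 1 = n := ⟨n - (h + 1) - c, by omega, by omega⟩
  have hN : n - (h + 1) + 1 + (c + 1) * (c + 1 - 1) / 2 = T + c + 1 + ∑ j ∈ range (c + 1), j := by
    rw [sum_range_id]
    omega
  have hreach := ExtremalSystem.reach_eq_coordSpan hn
  have hctrl := ExtremalSystem.foldl_extremalWord_coverStep hT hn
  rw [← coe_eq_univ, ← coordSpan_eq_top_iff, ← hreach] at hctrl
  refine ⟨_, _, fun i => isUnit_permMatrix _,
    fun _ => by rw [rank_submatrix_one (Fin.castLE_injective _), Fintype.card_fin],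
    Set.iUnion_eq_univ_iff.mpr fun v => ⟨_, hctrl ▸ Submodule.mem_top⟩,
    ⟨_, hctrl, by rw [hN, ExtremalSystem.length_extremalWord]⟩, fun π hπ => ?_⟩
  rw [hreach, coordSpan_eq_top_iff, coe_eq_univ] at hπ
  have : Nonempty (Fin n) := ⟨⟨h, by omega⟩⟩
  have hlen := sum_lt_length_of_foldl_coverStep_eq_univ _
    (fun x : Fin n => ExtremalSystem.weight h T x)
    (fun _ => ExtremalSystem.weight_eq_zero_of_mem_inputStates)
    (ExtremalSystem.exists_weight_modePerm_le hT hn) hπ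
  rw [ExtremalSystem.sum_weight hn] at hlen
  omega
end
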